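/- Let Ω ⊆ ℝ^q be open, δ ∈ (0,1), and let a_j : Ω → End(ℂ^{M_j}) (j = 1,2) be smooth and admit δ-admissible decompositions on Ω. Let p_j ∈ S^{μ_j}_{1,δ}(Ω×ℝ^q;(ℂ^{M₁},a₁),(ℂ^{M₂},a₂)) for j ∈ ℕ with μ_j → −∞ as j → ∞, and suppose p is a smooth Hom(ℂ^{M₁},ℂ^{M₂})-valued function on Ω×ℝ^q such that for every N ∈ ℕ there is σ_N ∈ ℝ with σ_N → −∞ and p − Σ_{j=1}^{N} p_j ∈ S^{σ_N}_{1,δ}(Ω×ℝ^q; Hom(ℂ^{M₁},ℂ^{M₂})) (the standard Hörmander class of type (1,δ)). Then p ∈ S^{μ̄}_{1,δ}(Ω×ℝ^q;(ℂ^{M₁},a₁),(ℂ^{M₂},a₂)) where μ̄ = max_j μ_j. -/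

import Mathlib

open Set Metric
noncomputable section

abbrev Vec (q : ℕ) := EuclideanSpace ℝ (Fin q)
abbrev CVec (M : ℕ) := EuclideanSpace ℂ (Fin M)
abbrev Hom' (M₁ M₂ : ℕ) := CVec M₁ →L[ℂ] CVec M₂
abbrev End' (M : ℕ) := Hom' M M

/-- `ϱ^a := exp((log ϱ)·a)`. -/
def rpowEnd {M : ℕ} (ϱ : ℝ) (a : End' M) : End' M :=
  NormedSpace.exp ((Real.log ϱ : ℂ) • a)

/-- `⟨η⟩ = (1+|η|²)^{1/2}`. -/
def jbr {q : ℕ} (η : Vec q) : ℝ := Real.sqrt (1 + ‖η‖ ^ 2)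

/-- Iterated partial derivatives in the second (covariable) slot. -/
def pdSnd {q : ℕ} {F : Type*} [NormedAddCommGroup F] [NormedSpace ℝ F]
    (β : List (Fin q)) (f : Vec q → Vec q → F) : Vec q → Vec q → F :=
  β.foldr (fun i g => fun y η => fderiv ℝ (g y) η (EuclideanSpace.single i (1:ℝ))) f

/-- Iterated partial derivatives in the first (base variable) slot. -/
def pdFst {q : ℕ} {F : Type*} [NormedAddCommGroup F] [NormedSpace ℝ F]
    (α : List (Fin q)) (f : Vec q → Vec q → F) : Vec q → Vec q → F :=
  α.foldr (fun i g => fun y η => fderiv ℝ (fun y' => g y' η) y (EuclideanSpace.single i (1:ℝ))) f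

/-- The twisted symbol class `S^μ_{1,δ}(Ω×ℝ^q;(ℂ^{M₁},a₁),(ℂ^{M₂},a₂))`. -/
def TwistedSymbol {q M₁ M₂ : ℕ} (Ω : Set (Vec q)) (δ μ : ℝ)
    (a₁ : Vec q → End' M₁) (a₂ : Vec q → End' M₂)
    (p : Vec q → Vec q → Hom' M₁ M₂) : Prop :=
  ContDiffOn ℝ (⊤ : ℕ∞) (fun z : Vec q × Vec q => p z.1 z.2) (Ω ×ˢ (univ : Set (Vec q))) ∧
  ∀ K : Set (Vec q), K ⊆ Ω → IsCompact K → ∀ α β : List (Fin q),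
    ∃ C > 0, ∀ y ∈ K, ∀ η : Vec q,
      ‖(rpowEnd (jbr η) (a₂ y)).comp
          ((pdFst α (pdSnd β p) y η).comp (rpowEnd (jbr η) (-(a₁ y))))‖
        ≤ C * jbr η ^ (μ - (β.length : ℝ) + δ * (α.length : ℝ))

/-- Spectrum of the restriction of `f` to an invariant subspace `V`. -/
def specRes {M : ℕ} (f : End' M) (V : Submodule ℂ (CVec M))
    (h : ∀ x ∈ V, f x ∈ V) : Set ℂ :=
  spectrum ℂ ((f : CVec M →ₗ[ℂ] CVec M).restrict h)

/-- `a` admits a `δ`-admissible decomposition on `Ω`. -/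
def AdmissibleDecomp {q M : ℕ} (Ω : Set (Vec q)) (δ : ℝ)
    (a : Vec q → End' M) : Prop :=
  ∃ (N : ℕ) (V : Fin N → Submodule ℂ (CVec M)),
    DirectSum.IsInternal V ∧
    ∃ hinv : ∀ k, ∀ y ∈ Ω, ∀ x ∈ V k, a y x ∈ V k,
      (∀ k, Metric.diam
          (closure (⋃ y, ⋃ hy : y ∈ Ω, specRes (a y) (V k) (hinv k y hy))) < δ) ∧
      Pairwise (fun k l => Disjoint
          (closure (⋃ y, ⋃ hy : y ∈ Ω, specRes (a y) (V k) (hinv k y hy)))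
          (closure (⋃ y, ⋃ hy : y ∈ Ω, specRes (a y) (V l) (hinv l y hy))))


section Aux

set_option maxHeartbeats 1000000
set_option synthInstance.maxHeartbeats 400000

open Filter

local notation "𝓔" => EuclideanSpace.single

lemma one_le_jbr {q : ℕ} (η : Vec q) : 1 ≤ jbr η := by
  have h1 : (1:ℝ) ≤ 1 + ‖η‖ ^ 2 := by nlinarith [sq_nonneg ‖η‖]
  have := Real.sqrt_le_sqrt h1
  simpa [jbr] using this

lemma jbr_pos {q : ℕ} (η : Vec q) : 0 < jbr η :=
  lt_of_lt_of_le one_pos (one_le_jbr η)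

lemma norm_pow_le_aux {M : ℕ} (x : End' M) : ∀ n : ℕ, ‖x ^ n‖ ≤ ‖x‖ ^ n := by
  intro n
  induction n with
  | zero => simpa [ContinuousLinearMap.one_def] using ContinuousLinearMap.norm_id_le
  | succ n ih =>
      rw [pow_succ, pow_succ]
      exact le_trans (norm_mul_le _ _)
        (mul_le_mul ih le_rfl (norm_nonneg _) (pow_nonneg (norm_nonneg _) _))

lemma norm_exp_le' {M : ℕ} (x : End' M) : ‖NormedSpace.exp x‖ ≤ Real.exp ‖x‖ := by
  rw [NormedSpace.exp_eq_tsum ℂ]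
  have hs : HasSum (fun n : ℕ => ((n.factorial : ℝ)⁻¹ : ℝ) • ‖x‖ ^ n) (Real.exp ‖x‖) := by
    have := NormedSpace.exp_series_hasSum_exp' (𝕂 := ℝ) (‖x‖)
    rwa [← Real.exp_eq_exp_ℝ] at this
  refine tsum_of_norm_bounded hs ?_
  intro n
  rw [norm_smul, smul_eq_mul]
  have h1 : ‖((n.factorial : ℂ)⁻¹ : ℂ)‖ = ((n.factorial : ℝ))⁻¹ := by
    rw [norm_inv]
    simp
  rw [h1]
  exact mul_le_mul_of_nonneg_left (norm_pow_le_aux x n) (by positivity)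

lemma norm_rpowEnd_le {M : ℕ} {ϱ : ℝ} (hϱ : 1 ≤ ϱ) (a : End' M) :
    ‖rpowEnd ϱ a‖ ≤ ϱ ^ ‖a‖ := by
  have h0 : (0:ℝ) < ϱ := lt_of_lt_of_le one_pos hϱ
  have h := norm_exp_le' ((Real.log ϱ : ℂ) • a)
  have hn : ‖(Real.log ϱ : ℂ) • a‖ = Real.log ϱ * ‖a‖ := by
    have h2 := norm_smul (Real.log ϱ : ℂ) a
    rw [h2]
    simp [abs_of_nonneg (Real.log_nonneg hϱ)]
  rw [Real.rpow_def_of_pos h0]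
  rw [rpowEnd]
  calc ‖NormedSpace.exp ((Real.log ϱ : ℂ) • a)‖ ≤ Real.exp ‖(Real.log ϱ : ℂ) • a‖ := h
    _ = Real.exp (Real.log ϱ * ‖a‖) := by rw [hn]

lemma rpowEnd_zero {M : ℕ} (ϱ : ℝ) : rpowEnd ϱ (0 : End' M) = 1 := by
  have h : (Real.log ϱ : ℂ) • (0 : End' M) = 0 :=
    ContinuousLinearMap.ext fun v => by
      rw [ContinuousLinearMap.smul_apply]
      simp
  rw [rpowEnd, h, NormedSpace.exp_zero]

section Calc

variable {q : ℕ} {F : Type*} [NormedAddCommGroup F] [NormedSpace ℝ F]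
  {Ω : Set (Vec q)} (hΩ : IsOpen Ω)

include hΩ in
/-- differentiability of the uncurried function at points of `Ω ×ˢ univ`. -/
lemma diffAt_of_cdOn {f : Vec q → Vec q → F}
    (hf : ContDiffOn ℝ (⊤ : ℕ∞) (fun z : Vec q × Vec q => f z.1 z.2) (Ω ×ˢ (univ : Set (Vec q))))
    {y η : Vec q} (hy : y ∈ Ω) :
    DifferentiableAt ℝ (fun z : Vec q × Vec q => f z.1 z.2) (y, η) := by
  have hz : ((y, η) : Vec q × Vec q) ∈ Ω ×ˢ (univ : Set (Vec q)) := ⟨hy, mem_univ _⟩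
  exact ((hf (y, η) hz).contDiffAt
      (((hΩ.prod isOpen_univ).mem_nhds hz))).differentiableAt
    (by simp)

lemma fderiv_snd_eq {f : Vec q → Vec q → F} {y η : Vec q}
    (hd : DifferentiableAt ℝ (fun z : Vec q × Vec q => f z.1 z.2) (y, η)) (v : Vec q) :
    fderiv ℝ (f y) η v = fderiv ℝ (fun z : Vec q × Vec q => f z.1 z.2) (y, η) (0, v) := by
  have h1 : HasFDerivAt (f y)
      ((fderiv ℝ (fun z : Vec q × Vec q => f z.1 z.2) (y, η)).comp
        (ContinuousLinearMap.inr ℝ (Vec q) (Vec q))) η :=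
    hd.hasFDerivAt.comp η (hasFDerivAt_prodMk_right y η)
  rw [h1.fderiv]
  rfl

lemma fderiv_fst_eq {f : Vec q → Vec q → F} {y η : Vec q}
    (hd : DifferentiableAt ℝ (fun z : Vec q × Vec q => f z.1 z.2) (y, η)) (v : Vec q) :
    fderiv ℝ (fun y' => f y' η) y v
      = fderiv ℝ (fun z : Vec q × Vec q => f z.1 z.2) (y, η) (v, 0) := by
  have h1 : HasFDerivAt (fun y' => f y' η)
      ((fderiv ℝ (fun z : Vec q × Vec q => f z.1 z.2) (y, η)).comp
        (ContinuousLinearMap.inl ℝ (Vec q) (Vec q))) y :=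
    hd.hasFDerivAt.comp (f := fun e : Vec q => (e, η)) y (hasFDerivAt_prodMk_left y η)
  rw [h1.fderiv]
  rfl

include hΩ in
lemma smooth_snd_step {f : Vec q → Vec q → F}
    (hf : ContDiffOn ℝ (⊤ : ℕ∞) (fun z : Vec q × Vec q => f z.1 z.2) (Ω ×ˢ (univ : Set (Vec q))))
    (i : Fin q) :
    ContDiffOn ℝ (⊤ : ℕ∞) (fun z : Vec q × Vec q =>
      fderiv ℝ (f z.1) z.2 (𝓔 i (1:ℝ))) (Ω ×ˢ (univ : Set (Vec q))) := by
  have hU : IsOpen (Ω ×ˢ (univ : Set (Vec q))) := hΩ.prod isOpen_univ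
  have hfd : ContDiffOn ℝ (⊤ : ℕ∞)
      (fderiv ℝ (fun z : Vec q × Vec q => f z.1 z.2)) (Ω ×ˢ (univ : Set (Vec q))) :=
    hf.fderiv_of_isOpen hU (by simp)
  have h2 : ContDiffOn ℝ (⊤ : ℕ∞) (fun z : Vec q × Vec q =>
      (fderiv ℝ (fun z : Vec q × Vec q => f z.1 z.2) z) ((0 : Vec q), 𝓔 i (1:ℝ)))
      (Ω ×ˢ (univ : Set (Vec q))) :=
    hfd.clm_apply contDiffOn_const
  refine h2.congr ?_
  rintro ⟨y, η⟩ hz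
  exact fderiv_snd_eq (diffAt_of_cdOn hΩ hf hz.1) _

include hΩ in
lemma smooth_fst_step {f : Vec q → Vec q → F}
    (hf : ContDiffOn ℝ (⊤ : ℕ∞) (fun z : Vec q × Vec q => f z.1 z.2) (Ω ×ˢ (univ : Set (Vec q))))
    (i : Fin q) :
    ContDiffOn ℝ (⊤ : ℕ∞) (fun z : Vec q × Vec q =>
      fderiv ℝ (fun y' => f y' z.2) z.1 (𝓔 i (1:ℝ))) (Ω ×ˢ (univ : Set (Vec q))) := by
  have hU : IsOpen (Ω ×ˢ (univ : Set (Vec q))) := hΩ.prod isOpen_univ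
  have hfd : ContDiffOn ℝ (⊤ : ℕ∞)
      (fderiv ℝ (fun z : Vec q × Vec q => f z.1 z.2)) (Ω ×ˢ (univ : Set (Vec q))) :=
    hf.fderiv_of_isOpen hU (by simp)
  have h2 : ContDiffOn ℝ (⊤ : ℕ∞) (fun z : Vec q × Vec q =>
      (fderiv ℝ (fun z : Vec q × Vec q => f z.1 z.2) z) (𝓔 i (1:ℝ), (0 : Vec q)))
      (Ω ×ˢ (univ : Set (Vec q))) :=
    hfd.clm_apply contDiffOn_const
  refine h2.congr ?_
  rintro ⟨y, η⟩ hz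
  exact fderiv_fst_eq (diffAt_of_cdOn hΩ hf hz.1) _

include hΩ in
lemma smooth_pdSnd {f : Vec q → Vec q → F}
    (hf : ContDiffOn ℝ (⊤ : ℕ∞) (fun z : Vec q × Vec q => f z.1 z.2) (Ω ×ˢ (univ : Set (Vec q))))
    (β : List (Fin q)) :
    ContDiffOn ℝ (⊤ : ℕ∞) (fun z : Vec q × Vec q => pdSnd β f z.1 z.2)
      (Ω ×ˢ (univ : Set (Vec q))) := by
  induction β with
  | nil => exact hf
  | cons i β ih => exact smooth_snd_step hΩ ih i

include hΩ in
lemma smooth_pdFst {f : Vec q → Vec q → F}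
    (hf : ContDiffOn ℝ (⊤ : ℕ∞) (fun z : Vec q × Vec q => f z.1 z.2) (Ω ×ˢ (univ : Set (Vec q))))
    (α : List (Fin q)) :
    ContDiffOn ℝ (⊤ : ℕ∞) (fun z : Vec q × Vec q => pdFst α f z.1 z.2)
      (Ω ×ˢ (univ : Set (Vec q))) := by
  induction α with
  | nil => exact hf
  | cons i α ih => exact smooth_fst_step hΩ ih i

include hΩ in
lemma diffAt_snd_partial {f : Vec q → Vec q → F}
    (hf : ContDiffOn ℝ (⊤ : ℕ∞) (fun z : Vec q × Vec q => f z.1 z.2) (Ω ×ˢ (univ : Set (Vec q))))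
    {y η : Vec q} (hy : y ∈ Ω) :
    DifferentiableAt ℝ (f y) η := by
  have hd := diffAt_of_cdOn hΩ hf (η := η) hy
  exact hd.comp η ((differentiableAt_const y).prodMk differentiableAt_id)

include hΩ in
lemma diffAt_fst_partial {f : Vec q → Vec q → F}
    (hf : ContDiffOn ℝ (⊤ : ℕ∞) (fun z : Vec q × Vec q => f z.1 z.2) (Ω ×ˢ (univ : Set (Vec q))))
    {y η : Vec q} (hy : y ∈ Ω) :
    DifferentiableAt ℝ (fun y' => f y' η) y := by
  have hd := diffAt_of_cdOn hΩ hf (η := η) hy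
  exact hd.comp (f := fun e : Vec q => (e, η)) y (differentiableAt_id.prodMk (differentiableAt_const η))

include hΩ in
lemma pdSnd_add {f g : Vec q → Vec q → F}
    (hf : ContDiffOn ℝ (⊤ : ℕ∞) (fun z : Vec q × Vec q => f z.1 z.2) (Ω ×ˢ (univ : Set (Vec q))))
    (hg : ContDiffOn ℝ (⊤ : ℕ∞) (fun z : Vec q × Vec q => g z.1 z.2) (Ω ×ˢ (univ : Set (Vec q))))
    (β : List (Fin q)) :
    ∀ y ∈ Ω, ∀ η, pdSnd β (fun y η => f y η + g y η) y η
      = pdSnd β f y η + pdSnd β g y η := by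
  induction β with
  | nil => intro y _ η; rfl
  | cons i β ih =>
      intro y hy η
      show fderiv ℝ (pdSnd β (fun y η => f y η + g y η) y) η (𝓔 i (1:ℝ))
        = fderiv ℝ (pdSnd β f y) η (𝓔 i (1:ℝ)) + fderiv ℝ (pdSnd β g y) η (𝓔 i (1:ℝ))
      have hfun : pdSnd β (fun y η => f y η + g y η) y
          = fun η' => pdSnd β f y η' + pdSnd β g y η' :=
        funext fun η' => ih y hy η'
      rw [hfun]
      have d1 : DifferentiableAt ℝ (pdSnd β f y) η :=
        diffAt_snd_partial hΩ (smooth_pdSnd hΩ hf β) hy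
      have d2 : DifferentiableAt ℝ (pdSnd β g y) η :=
        diffAt_snd_partial hΩ (smooth_pdSnd hΩ hg β) hy
      rw [fderiv_fun_add d1 d2]
      simp

include hΩ in
lemma pdFst_add_of_agree {H h₁ h₂ : Vec q → Vec q → F}
    (hh₁ : ContDiffOn ℝ (⊤ : ℕ∞) (fun z : Vec q × Vec q => h₁ z.1 z.2) (Ω ×ˢ (univ : Set (Vec q))))
    (hh₂ : ContDiffOn ℝ (⊤ : ℕ∞) (fun z : Vec q × Vec q => h₂ z.1 z.2) (Ω ×ˢ (univ : Set (Vec q))))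
    (hagree : ∀ y ∈ Ω, ∀ η, H y η = h₁ y η + h₂ y η)
    (α : List (Fin q)) :
    ∀ y ∈ Ω, ∀ η, pdFst α H y η = pdFst α h₁ y η + pdFst α h₂ y η := by
  induction α with
  | nil => exact hagree
  | cons i α ih =>
      intro y hy η
      show fderiv ℝ (fun y' => pdFst α H y' η) y (𝓔 i (1:ℝ))
        = fderiv ℝ (fun y' => pdFst α h₁ y' η) y (𝓔 i (1:ℝ))
          + fderiv ℝ (fun y' => pdFst α h₂ y' η) y (𝓔 i (1:ℝ))
      have hev : (fun y' => pdFst α H y' η)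
          =ᶠ[nhds y] fun y' => pdFst α h₁ y' η + pdFst α h₂ y' η :=
        Filter.eventuallyEq_of_mem (hΩ.mem_nhds hy) (fun y' hy' => ih y' hy' η)
      rw [hev.fderiv_eq]
      have d1 : DifferentiableAt ℝ (fun y' => pdFst α h₁ y' η) y :=
        diffAt_fst_partial hΩ (smooth_pdFst hΩ hh₁ α) hy
      have d2 : DifferentiableAt ℝ (fun y' => pdFst α h₂ y' η) y :=
        diffAt_fst_partial hΩ (smooth_pdFst hΩ hh₂ α) hy
      rw [fderiv_fun_add d1 d2]
      simp

include hΩ in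
lemma pd_add {f g : Vec q → Vec q → F}
    (hf : ContDiffOn ℝ (⊤ : ℕ∞) (fun z : Vec q × Vec q => f z.1 z.2) (Ω ×ˢ (univ : Set (Vec q))))
    (hg : ContDiffOn ℝ (⊤ : ℕ∞) (fun z : Vec q × Vec q => g z.1 z.2) (Ω ×ˢ (univ : Set (Vec q))))
    (α β : List (Fin q)) :
    ∀ y ∈ Ω, ∀ η, pdFst α (pdSnd β (fun y η => f y η + g y η)) y η
      = pdFst α (pdSnd β f) y η + pdFst α (pdSnd β g) y η :=
  pdFst_add_of_agree hΩ (smooth_pdSnd hΩ hf β) (smooth_pdSnd hΩ hg β)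
    (pdSnd_add hΩ hf hg β) α

lemma pdSnd_zero (β : List (Fin q)) :
    pdSnd β (fun _ _ => (0 : F)) = fun _ _ => 0 := by
  induction β with
  | nil => rfl
  | cons i β ih =>
      funext y η
      show fderiv ℝ (pdSnd β (fun _ _ => (0:F)) y) η (𝓔 i (1:ℝ)) = 0
      rw [ih]
      simp

lemma pdFst_zero (α : List (Fin q)) :
    pdFst α (fun _ _ => (0 : F)) = fun _ _ => 0 := by
  induction α with
  | nil => rfl
  | cons i α ih =>
      funext y η
      show fderiv ℝ (fun y' => pdFst α (fun _ _ => (0:F)) y' η) y (𝓔 i (1:ℝ)) = 0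
      rw [ih]
      simp

end Calc

end Aux

/-- asymptotic summation stays in the twisted class, with order the
maximum of the orders of the summands. -/
theorem statement3 {q M₁ M₂ : ℕ} (Ω : Set (Vec q)) (hΩ : IsOpen Ω)
    (δ : ℝ) (hδ : δ ∈ Set.Ioo (0:ℝ) 1)
    (a₁ : Vec q → End' M₁) (a₂ : Vec q → End' M₂)
    (ha₁ : ContDiffOn ℝ (⊤ : ℕ∞) a₁ Ω) (ha₂ : ContDiffOn ℝ (⊤ : ℕ∞) a₂ Ω)
    (h1 : AdmissibleDecomp Ω δ a₁) (h2 : AdmissibleDecomp Ω δ a₂)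
    (μ : ℕ → ℝ) (hμ : Filter.Tendsto μ Filter.atTop Filter.atBot)
    (pj : ℕ → Vec q → Vec q → Hom' M₁ M₂)
    (hpj : ∀ j, TwistedSymbol Ω δ (μ j) a₁ a₂ (pj j))
    (p : Vec q → Vec q → Hom' M₁ M₂)
    (hpsm : ContDiffOn ℝ (⊤ : ℕ∞) (fun z : Vec q × Vec q => p z.1 z.2) (Ω ×ˢ (univ : Set (Vec q))))
    (σ : ℕ → ℝ) (hσ : Filter.Tendsto σ Filter.atTop Filter.atBot)
    (hasymp : ∀ N : ℕ,
      TwistedSymbol Ω δ (σ N) (fun _ => (0 : End' M₁)) (fun _ => (0 : End' M₂))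
        (fun y η => p y η - ∑ j ∈ Finset.range N, pj j y η))
    (μbar : ℝ) (hμbar : IsGreatest (Set.range μ) μbar) :
    TwistedSymbol Ω δ μbar a₁ a₂ p := by
  refine ⟨hpsm, ?_⟩
  intro K hK hKc α β
  -- bounds for the twists over K
  obtain ⟨A₁, hA₁⟩ := hKc.exists_bound_of_continuousOn ((ha₁.continuousOn).mono hK)
  obtain ⟨A₂, hA₂⟩ := hKc.exists_bound_of_continuousOn ((ha₂.continuousOn).mono hK)
  -- choose N so far out that the remainder is small enough
  obtain ⟨N, hN⟩ : ∃ N, σ N ≤ μbar - (max A₁ 0 + max A₂ 0) :=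
    (hσ.eventually (Filter.eventually_le_atBot (μbar - (max A₁ 0 + max A₂ 0)))).exists
  obtain ⟨Cr, hCr0, hCr⟩ := (hasymp N).2 K hK hKc α β
  choose Cj hCj0 hCjle using fun j => (hpj j).2 K hK hKc α β
  refine ⟨Cr + ∑ j ∈ Finset.range N, Cj j, ?_, ?_⟩
  · have hs0 : (0:ℝ) ≤ ∑ j ∈ Finset.range N, Cj j :=
      Finset.sum_nonneg fun j _ => (hCj0 j).le
    linarith
  intro y hy η
  have hyΩ : y ∈ Ω := hK hy
  have hϱ1 : 1 ≤ jbr η := one_le_jbr η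
  have hϱ0 : (0:ℝ) < jbr η := jbr_pos η
  -- smoothness of the partial sum
  have hssm : ContDiffOn ℝ (⊤ : ℕ∞)
      (fun z : Vec q × Vec q => ∑ j ∈ Finset.range N, pj j z.1 z.2)
      (Ω ×ˢ (univ : Set (Vec q))) :=
    ContDiffOn.sum fun j _ => (hpj j).1
  -- split the sum of symbols under differentiation
  have hsum_split : ∀ n : ℕ, ∀ y ∈ Ω, ∀ η,
      pdFst α (pdSnd β (fun y η => ∑ j ∈ Finset.range n, pj j y η)) y η
        = ∑ j ∈ Finset.range n, pdFst α (pdSnd β (pj j)) y η := by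
    intro n
    induction n with
    | zero =>
        intro y hy η
        have h0 : (fun (y η : Vec q) => ∑ j ∈ Finset.range 0, pj j y η)
            = fun _ _ => (0 : Hom' M₁ M₂) := by funext y η; simp
        rw [h0, pdSnd_zero, pdFst_zero]
        simp
    | succ n ih =>
        intro y hy η
        have hsm : ContDiffOn ℝ (⊤ : ℕ∞)
            (fun z : Vec q × Vec q => ∑ j ∈ Finset.range n, pj j z.1 z.2)
            (Ω ×ˢ (univ : Set (Vec q))) :=
          ContDiffOn.sum fun j _ => (hpj j).1
        have h0 : (fun (y η : Vec q) => ∑ j ∈ Finset.range (n+1), pj j y η)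
            = fun y η => (∑ j ∈ Finset.range n, pj j y η) + pj n y η := by
          funext y η; rw [Finset.sum_range_succ]
        rw [h0,
          pd_add hΩ (f := fun y η => ∑ j ∈ Finset.range n, pj j y η) (g := pj n)
            hsm (hpj n).1 α β y hy η,
          ih y hy η, Finset.sum_range_succ]
  -- decomposition of p
  have hp' : p = fun y η =>
      (p y η - ∑ j ∈ Finset.range N, pj j y η) + ∑ j ∈ Finset.range N, pj j y η := by
    funext y η; simp
  have hdecomp : pdFst α (pdSnd β p) y η
      = pdFst α (pdSnd β (fun y η => p y η - ∑ j ∈ Finset.range N, pj j y η)) y η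
        + ∑ j ∈ Finset.range N, pdFst α (pdSnd β (pj j)) y η := by
    conv_lhs => rw [hp']
    rw [pd_add hΩ (f := fun y η => p y η - ∑ j ∈ Finset.range N, pj j y η)
        (g := fun y η => ∑ j ∈ Finset.range N, pj j y η) (hasymp N).1 hssm α β y hyΩ η,
      hsum_split N y hyΩ η]
  -- the untwisted remainder estimate
  have hz1 : -(0 : End' M₁) = 0 :=
    ContinuousLinearMap.ext fun v => by rw [ContinuousLinearMap.neg_apply]; simp
  have hCr' := hCr y hy η
  simp only [hz1, rpowEnd_zero, ContinuousLinearMap.one_def,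
    ContinuousLinearMap.id_comp, ContinuousLinearMap.comp_id] at hCr'
  -- twisting bounds
  have hA2y : ‖rpowEnd (jbr η) (a₂ y)‖ ≤ jbr η ^ max A₂ 0 :=
    le_trans (norm_rpowEnd_le hϱ1 _)
      (Real.rpow_le_rpow_of_exponent_le hϱ1 (le_trans (hA₂ y hy) (le_max_left _ _)))
  have hA1y : ‖rpowEnd (jbr η) (-(a₁ y))‖ ≤ jbr η ^ max A₁ 0 :=
    le_trans (norm_rpowEnd_le hϱ1 _)
      (Real.rpow_le_rpow_of_exponent_le hϱ1 (by
        rw [norm_neg]; exact le_trans (hA₁ y hy) (le_max_left _ _)))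
  -- the twisted remainder estimate
  have hrem : ‖(rpowEnd (jbr η) (a₂ y)).comp
      ((pdFst α (pdSnd β (fun y η => p y η - ∑ j ∈ Finset.range N, pj j y η)) y η).comp
        (rpowEnd (jbr η) (-(a₁ y))))‖
      ≤ Cr * jbr η ^ (μbar - (β.length : ℝ) + δ * (α.length : ℝ)) := by
    refine le_trans (le_trans (ContinuousLinearMap.opNorm_comp_le _ _)
      (mul_le_mul_of_nonneg_left (ContinuousLinearMap.opNorm_comp_le _ _)
        (norm_nonneg _))) ?_
    have step2 : ‖rpowEnd (jbr η) (a₂ y)‖ *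
        (‖pdFst α (pdSnd β (fun y η => p y η - ∑ j ∈ Finset.range N, pj j y η)) y η‖ *
          ‖rpowEnd (jbr η) (-(a₁ y))‖)
        ≤ (jbr η ^ max A₂ 0) *
            ((Cr * jbr η ^ (σ N - (β.length : ℝ) + δ * (α.length : ℝ))) *
              (jbr η ^ max A₁ 0)) :=
      mul_le_mul hA2y
        (mul_le_mul hCr' hA1y (norm_nonneg _)
          (mul_nonneg hCr0.le (Real.rpow_nonneg hϱ0.le _)))
        (mul_nonneg (norm_nonneg _) (norm_nonneg _)) (Real.rpow_nonneg hϱ0.le _)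
    refine le_trans step2 ?_
    have hmul : ∀ x z : ℝ, jbr η ^ x * jbr η ^ (σ N - (β.length : ℝ) + δ * (α.length : ℝ)) * jbr η ^ z
        = jbr η ^ (x + (σ N - (β.length : ℝ) + δ * (α.length : ℝ)) + z) := fun x z => by
      rw [← Real.rpow_add hϱ0, ← Real.rpow_add hϱ0]
    have step3 : (jbr η ^ max A₂ 0) *
        ((Cr * jbr η ^ (σ N - (β.length : ℝ) + δ * (α.length : ℝ))) *
          (jbr η ^ max A₁ 0))
        = Cr * jbr η ^ (max A₂ 0 + (σ N - (β.length : ℝ) + δ * (α.length : ℝ)) + max A₁ 0) := by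
      rw [← hmul (max A₂ 0) (max A₁ 0)]; ring
    rw [step3]
    have hle : max A₂ 0 + (σ N - (β.length : ℝ) + δ * (α.length : ℝ)) + max A₁ 0
        ≤ μbar - (β.length : ℝ) + δ * (α.length : ℝ) := by linarith
    exact mul_le_mul_of_nonneg_left
      (Real.rpow_le_rpow_of_exponent_le hϱ1 hle) hCr0.le
  -- termwise estimates for the summands
  have hterm : ∀ j ∈ Finset.range N,
      ‖(rpowEnd (jbr η) (a₂ y)).comp
        ((pdFst α (pdSnd β (pj j)) y η).comp (rpowEnd (jbr η) (-(a₁ y))))‖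
      ≤ Cj j * jbr η ^ (μbar - (β.length : ℝ) + δ * (α.length : ℝ)) := by
    intro j _
    refine le_trans (hCjle j y hy η) ?_
    have hμj : μ j ≤ μbar := hμbar.2 ⟨j, rfl⟩
    exact mul_le_mul_of_nonneg_left
      (Real.rpow_le_rpow_of_exponent_le hϱ1 (by linarith)) (hCj0 j).le
  -- splitting the full composition
  have hsplit2 : (rpowEnd (jbr η) (a₂ y)).comp
      ((pdFst α (pdSnd β p) y η).comp (rpowEnd (jbr η) (-(a₁ y))))
      = (rpowEnd (jbr η) (a₂ y)).comp
          ((pdFst α (pdSnd β (fun y η => p y η - ∑ j ∈ Finset.range N, pj j y η)) y η).comp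
            (rpowEnd (jbr η) (-(a₁ y))))
        + ∑ j ∈ Finset.range N, (rpowEnd (jbr η) (a₂ y)).comp
            ((pdFst α (pdSnd β (pj j)) y η).comp (rpowEnd (jbr η) (-(a₁ y)))) := by
    rw [hdecomp]
    refine ContinuousLinearMap.ext fun v => ?_
    simp [ContinuousLinearMap.comp_apply, ContinuousLinearMap.add_apply,
      ContinuousLinearMap.sum_apply, map_add, map_sum]
  rw [hsplit2, add_mul, Finset.sum_mul]
  exact le_trans (norm_add_le _ _)
    (add_le_add hrem (le_trans (norm_sum_le _ _) (Finset.sum_le_sum hterm)))
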